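/- Assume the real constants B^{KK,αβ}_{K,γ} (α, β, γ = 0,…,3) satisfy the null condition B^{KK,αβ}_{K,γ} ξ_α ξ_β ξ_γ = 0 whenever ξ₀²/c_K² − ξ₁² − ξ₂² − ξ₃² = 0. Let c₀ = min{c_I/2 : I = 1,…,D}. Then there is a constant C such that for all smooth real-valued functions u^K, v^K, w^K on (an open set containing) {(t,x) : t ≥ 0, |x| ≥ c₀t/2} and all such (t,x): |B^{KK,αβ}_{K,γ} ∂_α u^K ∂_β v^K ∂_γ w^K| ≤ C ⟨t+|x|⟩^{−1} [ |Γ u^K| |∂ v^K| |∂ w^K| + |∂ u^K| |Γ v^K| |∂ w^K| + |∂ u^K| |∂ v^K| |Γ w^K| + ⟨c_K t − r⟩ |∂ u^K| |∂ v^K| |∂ w^K| ], where the sum over α, β, γ from 0 to 3 is implicit on the left. -/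

import Mathlib

/-!
At a point with `|x| ≥ 1` take the covector `ν = (-c_K, x/|x|)`. It lies on the characteristic
cone, so the null condition gives `B(ν, ν, ν) = 0`. Split each gradient as
`∂f = s ν + (∂f - s ν)` with `s = -∂_t f / c_K`. The remainder has no time component, and its
spatial part is the angular part of `∇f`, bounded by `|Ωf| / |x|`, plus the radial combination
`(∂_t f + c_K ∂_r f) / c_K`. The identity `t (∂_t + c ∂_r) = L + (c t - r) ∂_r` bounds the latter by
`(|Lf| + ⟨c_K t - r⟩ |∂f|) / ⟨t + r⟩`. In the region `|x| ≥ c₀ t / 2` we have `⟨t + r⟩ ≲ r`,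
and for `|x| < 1` the weight `⟨t + r⟩` is bounded, so there the whole gradient counts as good.
Expanding the trilinear form, every term except `B(s_u ν, s_v ν, s_w ν)` has a good factor.
-/

noncomputable section

open MeasureTheory Real Set

abbrev E3 : Type := EuclideanSpace ℝ (Fin 3)

/-- Japanese bracket `⟨s⟩ = (1+s²)^{1/2}`. -/
def jb (s : ℝ) : ℝ := Real.sqrt (1 + s ^ 2)

/-- Time derivative `∂_t`. -/
def pdt (w : ℝ → E3 → ℝ) : ℝ → E3 → ℝ := fun t x => deriv (fun s => w s x) t

/-- Spatial partial derivative `∂_i`. -/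
def pdx (i : Fin 3) (w : ℝ → E3 → ℝ) : ℝ → E3 → ℝ :=
  fun t x => fderiv ℝ (fun y => w t y) x (EuclideanSpace.single i 1)

/-- Space-time derivative `∂_α`, with `α = 0` the time derivative. -/
def pd (α : Fin 4) : (ℝ → E3 → ℝ) → ℝ → E3 → ℝ :=
  if h : α = 0 then pdt else pdx (α.pred h)

/-- Radial derivative `∂_r`. -/
def pdr (w : ℝ → E3 → ℝ) : ℝ → E3 → ℝ :=
  fun t x => ∑ i : Fin 3, (x i / ‖x‖) * pdx i w t x

/-- Scaling vector field `L = t∂_t + r∂_r`. -/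
def Lop (w : ℝ → E3 → ℝ) : ℝ → E3 → ℝ :=
  fun t x => t * pdt w t x + ∑ i : Fin 3, x i * pdx i w t x

/-- Rotation vector fields `Ω_{ij} = x_i ∂_j - x_j ∂_i`. -/
def rot (i j : Fin 3) (w : ℝ → E3 → ℝ) : ℝ → E3 → ℝ :=
  fun t x => x i * pdx j w t x - x j * pdx i w t x

/-- The eight admissible vector fields `Γ = {L, Ω_{ij}, ∂_k}`. -/
def gam (k : Fin 8) : (ℝ → E3 → ℝ) → ℝ → E3 → ℝ :=
  if k = 0 then Lop else if k = 1 then rot 0 1 else if k = 2 then rot 0 2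
  else if k = 3 then rot 1 2 else if k = 4 then pd 0 else if k = 5 then pd 1
  else if k = 6 then pd 2 else pd 3

/-- Iterated application of a family of operators along a word. -/
def iterOp {m : ℕ} (F : Fin m → (ℝ → E3 → ℝ) → ℝ → E3 → ℝ) :
    ∀ {n : ℕ}, (Fin n → Fin m) → (ℝ → E3 → ℝ) → ℝ → E3 → ℝ
  | 0, _, w => w
  | _ + 1, μ, w => F (μ 0) (iterOp F (fun i => μ i.succ) w)

/-- `Γ^μ`. -/
def gamW {n : ℕ} (μ : Fin n → Fin 8) : (ℝ → E3 → ℝ) → ℝ → E3 → ℝ := iterOp gam μ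

/-- `∂^μ`. -/
def pdW {n : ℕ} (μ : Fin n → Fin 4) : (ℝ → E3 → ℝ) → ℝ → E3 → ℝ := iterOp pd μ

/-- `|∂w|`: pointwise size of the full space-time gradient. -/
def aGrad (w : ℝ → E3 → ℝ) (t : ℝ) (x : E3) : ℝ := ∑ α : Fin 4, |pd α w t x|

/-- `|∂²w|`. -/
def aGrad2 (w : ℝ → E3 → ℝ) (t : ℝ) (x : E3) : ℝ :=
  ∑ α : Fin 4, ∑ β : Fin 4, |pd α (pd β w) t x|

/-- `|Γw|`. -/
def aGam (w : ℝ → E3 → ℝ) (t : ℝ) (x : E3) : ℝ := ∑ k : Fin 8, |gam k w t x|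

/-- `|∂Γw|`. -/
def aGradGam (w : ℝ → E3 → ℝ) (t : ℝ) (x : E3) : ℝ :=
  ∑ α : Fin 4, ∑ k : Fin 8, |pd α (gam k w) t x|

/-- The d'Alembertian `∂_t² - c²Δ`. -/
def dAlembert (cs : ℝ) (w : ℝ → E3 → ℝ) : ℝ → E3 → ℝ :=
  fun t x => pdt (pdt w) t x - cs ^ 2 * ∑ i : Fin 3, pdx i (pdx i w) t x

/-- The perturbed d'Alembertian `(□_h u)^I`. -/
def boxH {D : ℕ} (c : Fin D → ℝ) (h : Fin D → Fin D → Fin 4 → Fin 4 → ℝ → E3 → ℝ)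
    (u : Fin D → ℝ → E3 → ℝ) (I : Fin D) : ℝ → E3 → ℝ :=
  fun t x => dAlembert (c I) (u I) t x
    + ∑ J, ∑ α, ∑ β, h I J α β t x * pd α (pd β (u J)) t x

/-- The commutator `[P, h^{IJ,γδ}∂_γ∂_δ]u` (the `I`-th component). -/
def commPH {D : ℕ} (P : (ℝ → E3 → ℝ) → ℝ → E3 → ℝ)
    (h : Fin D → Fin D → Fin 4 → Fin 4 → ℝ → E3 → ℝ)
    (u : Fin D → ℝ → E3 → ℝ) (I : Fin D) : ℝ → E3 → ℝ :=
  fun t x => ∑ J, ∑ γ, ∑ δ,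
    (P (fun s y => h I J γ δ s y * pd γ (pd δ (u J)) s y) t x
      - h I J γ δ t x * pd γ (pd δ (P (u J))) t x)

/-- `K` has boundary which is locally the sublevel set of a `C^ord` defining
function with nonvanishing gradient. -/
def HasSmoothBoundary (K : Set E3) (ord : ℕ∞) : Prop :=
  ∀ x ∈ frontier K, ∃ (U : Set E3) (f : E3 → ℝ), IsOpen U ∧ x ∈ U ∧
    ContDiff ℝ ord f ∧ (∀ y ∈ U, fderiv ℝ f y ≠ 0) ∧ K ∩ U = {y ∈ U | f y ≤ 0}

/-- Star-shaped with respect to the origin. -/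
def StarShapedZero (K : Set E3) : Prop :=
  ∀ x ∈ K, ∀ s : ℝ, s ∈ Set.Icc (0:ℝ) 1 → s • x ∈ K

/-- Modified scaling vector field. -/
def Ltilde (η : E3 → ℝ) (w : ℝ → E3 → ℝ) : ℝ → E3 → ℝ :=
  fun t x => t * pdt w t x + η x * ∑ i : Fin 3, x i * pdx i w t x

/-- spatial derivative for functions of `x` only -/
def sd (i : Fin 3) (f : E3 → ℝ) : E3 → ℝ :=
  fun x => fderiv ℝ f x (EuclideanSpace.single i 1)

def rotS (i j : Fin 3) (f : E3 → ℝ) : E3 → ℝ := fun x => x i * sd j f x - x j * sd i f x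

def iterOpS {m : ℕ} (F : Fin m → (E3 → ℝ) → E3 → ℝ) :
    ∀ {n : ℕ}, (Fin n → Fin m) → (E3 → ℝ) → E3 → ℝ
  | 0, _, f => f
  | _ + 1, μ, f => F (μ 0) (iterOpS F (fun i => μ i.succ) f)

def sdW {n : ℕ} (μ : Fin n → Fin 3) : (E3 → ℝ) → E3 → ℝ := iterOpS sd μ

def zS (k : Fin 6) : (E3 → ℝ) → E3 → ℝ :=
  if k = 0 then rotS 0 1 else if k = 1 then rotS 0 2 else if k = 2 then rotS 1 2
  else if k = 3 then sd 0 else if k = 4 then sd 1 else sd 2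

def zSW {n : ℕ} (μ : Fin n → Fin 6) : (E3 → ℝ) → E3 → ℝ := iterOpS zS μ

def zST (k : Fin 7) : (ℝ → E3 → ℝ) → ℝ → E3 → ℝ :=
  if k = 0 then rot 0 1 else if k = 1 then rot 0 2 else if k = 2 then rot 1 2
  else if k = 3 then pd 0 else if k = 4 then pd 1 else if k = 5 then pd 2 else pd 3

def zSTW {n : ℕ} (μ : Fin n → Fin 7) : (ℝ → E3 → ℝ) → ℝ → E3 → ℝ := iterOp zST μ

open Finset

lemma sq_jb (s : ℝ) : jb s ^ 2 = 1 + s ^ 2 := Real.sq_sqrt (by positivity)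

lemma jb_nonneg (s : ℝ) : 0 ≤ jb s := Real.sqrt_nonneg _

lemma one_le_jb (s : ℝ) : 1 ≤ jb s := by nlinarith [sq_jb s, jb_nonneg s]

lemma jb_pos (s : ℝ) : 0 < jb s := one_pos.trans_le (one_le_jb s)

lemma abs_le_jb (s : ℝ) : |s| ≤ jb s := by
  nlinarith [sq_jb s, jb_nonneg s, abs_nonneg s, sq_abs s]

lemma jb_le_one_add_abs (s : ℝ) : jb s ≤ 1 + |s| := by
  nlinarith [sq_jb s, jb_nonneg s, abs_nonneg s, sq_abs s]

lemma jb_add_le_mul_max {c₀ t r : ℝ} (hc₀ : 0 < c₀) (ht : 0 ≤ t) (htr : c₀ * t / 2 ≤ r) :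
    jb (t + r) ≤ (2 + 2 / c₀) * max 1 r := by
  have hr : 0 ≤ r := le_trans (by positivity) htr
  have hjb : jb (t + r) ≤ 1 + t + r := by
    simpa [abs_of_nonneg (add_nonneg ht hr), add_assoc] using jb_le_one_add_abs (t + r)
  have htm : t ≤ 2 / c₀ * max 1 r := by
    rw [div_mul_eq_mul_div, le_div_iff₀ hc₀]
    nlinarith [le_max_right 1 r]
  have h1 := le_max_left 1 r
  have h2 := le_max_right 1 r
  nlinarith

lemma jb_add_le_or_le {c t r : ℝ} (ht : 0 ≤ t) (hr : 1 ≤ r) :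
    jb (t + r) ≤ 4 * (1 + c) * t ∨ jb (t + r) ≤ 4 * jb (c * t - r) := by
  have hjb : jb (t + r) ≤ 1 + t + r := by
    simpa [abs_of_nonneg (by linarith : 0 ≤ t + r), add_assoc] using jb_le_one_add_abs (t + r)
  rcases le_or_gt r ((1 + 2 * c) * t) with h | h
  · left; nlinarith
  · right
    have := abs_le_jb (c * t - r)
    have := neg_abs_le (c * t - r)
    nlinarith

/-- `t (a₀ + c ρ) = (t a₀ + r ρ) + (c t - r) ρ`: divide by `t` when `⟨t + r⟩ ≲ t`, and otherwise
use `⟨t + r⟩ ≲ ⟨c t - r⟩`. -/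
lemma abs_add_mul_le_of_scaling {c t r a₀ ρ P : ℝ} (hc : 0 < c) (ht : 0 ≤ t) (hr : 1 ≤ r)
    (ha₀ : |a₀| ≤ P) (hρ : |ρ| ≤ P) :
    |a₀ + c * ρ| ≤ 4 * (1 + c) * (|t * a₀ + r * ρ| + jb (c * t - r) * P) / jb (t + r) := by
  rw [le_div_iff₀ (jb_pos _)]
  have hjK := jb_nonneg (c * t - r)
  have hP : 0 ≤ P := (abs_nonneg _).trans ha₀
  rcases jb_add_le_or_le ht hr with h | h
  · have key : t * |a₀ + c * ρ| ≤ |t * a₀ + r * ρ| + jb (c * t - r) * P :=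
      calc t * |a₀ + c * ρ| = |(t * a₀ + r * ρ) + (c * t - r) * ρ| := by
            rw [← abs_of_nonneg ht, ← abs_mul, abs_of_nonneg ht]; ring_nf
        _ ≤ |t * a₀ + r * ρ| + |c * t - r| * |ρ| := by rw [← abs_mul]; exact abs_add_le _ _
        _ ≤ |t * a₀ + r * ρ| + jb (c * t - r) * P := by
            gcongr; exact abs_le_jb _
    nlinarith [abs_nonneg (a₀ + c * ρ)]
  · have hsum : |a₀ + c * ρ| ≤ (1 + c) * P :=
      calc |a₀ + c * ρ| ≤ |a₀| + c * |ρ| := by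
            simpa [abs_mul, abs_of_pos hc] using abs_add_le a₀ (c * ρ)
        _ ≤ (1 + c) * P := by nlinarith
    nlinarith [abs_nonneg (t * a₀ + r * ρ), mul_le_mul hsum h (jb_nonneg _) (by positivity)]

lemma abs_sub_radial_le {ι : Type*} [Fintype ι] (x : EuclideanSpace ℝ ι) (hx : x ≠ 0)
    (a : ι → ℝ) (i : ι) :
    |a i - x i / ‖x‖ * ((∑ j, x j * a j) / ‖x‖)| ≤ (∑ j, |x i * a j - x j * a i|) / ‖x‖ := by
  have hr : 0 < ‖x‖ := norm_pos_iff.mpr hx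
  have hr2 : ‖x‖ ^ 2 = ∑ j, x j ^ 2 := by simp [EuclideanSpace.norm_sq_eq]
  have hid : a i - x i / ‖x‖ * ((∑ j, x j * a j) / ‖x‖)
      = (∑ j, x j * (x j * a i - x i * a j)) / ‖x‖ ^ 2 := by
    have hnum : ∑ j, x j * (x j * a i - x i * a j) = ‖x‖ ^ 2 * a i - x i * ∑ j, x j * a j := by
      rw [hr2, sum_mul, mul_sum, ← sum_sub_distrib]
      exact sum_congr rfl fun j _ => by ring
    rw [hnum]
    field_simp
  have hnum : |∑ j, x j * (x j * a i - x i * a j)| ≤ ‖x‖ * ∑ j, |x i * a j - x j * a i| := by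
    rw [mul_sum]
    refine (abs_sum_le_sum_abs _ _).trans (sum_le_sum fun j _ => ?_)
    rw [abs_mul, abs_sub_comm]
    exact mul_le_mul_of_nonneg_right (PiLp.norm_apply_le x j) (abs_nonneg _)
  rw [hid, abs_div, abs_of_pos (pow_pos hr 2), div_le_div_iff₀ (pow_pos hr 2) hr]
  nlinarith [mul_le_mul_of_nonneg_right hnum hr.le]

lemma abs_coord_div_norm_le_one (x : E3) (i : Fin 3) : |x i / ‖x‖| ≤ 1 := by
  rw [abs_div, abs_norm]; exact div_le_one_of_le₀ (PiLp.norm_apply_le x i) (norm_nonneg x)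

section Pointwise

variable (f : ℝ → E3 → ℝ) (t : ℝ) (x : E3)

lemma pd_zero : pd 0 = pdt := rfl

lemma pd_succ (i : Fin 3) : pd i.succ = pdx i := by
  rw [pd, dif_neg (Fin.succ_ne_zero i), Fin.pred_succ]

lemma aGrad_nonneg : 0 ≤ aGrad f t x := sum_nonneg fun _ _ => abs_nonneg _

lemma aGam_nonneg : 0 ≤ aGam f t x := sum_nonneg fun _ _ => abs_nonneg _

lemma abs_pd_le_aGrad (α : Fin 4) : |pd α f t x| ≤ aGrad f t x :=
  single_le_sum (f := fun α => |pd α f t x|) (fun _ _ => abs_nonneg _) (mem_univ α)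

lemma sum_abs_pdx_le_aGrad : ∑ i, |pdx i f t x| ≤ aGrad f t x := by
  rw [aGrad, Fin.sum_univ_succ (fun α => |pd α f t x|)]
  simp only [pd_succ]
  linarith [abs_nonneg (pd 0 f t x)]

lemma pdr_eq : pdr f t x = (∑ j, x j * pdx j f t x) / ‖x‖ := by
  simp only [pdr, sum_div, div_mul_eq_mul_div]

lemma abs_pdr_le_aGrad : |pdr f t x| ≤ aGrad f t x := by
  refine (abs_sum_le_sum_abs _ _).trans
    ((sum_le_sum fun i _ => ?_).trans (sum_abs_pdx_le_aGrad f t x))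
  rw [abs_mul]
  exact mul_le_of_le_one_left (abs_nonneg _) (abs_coord_div_norm_le_one x i)

lemma Lop_eq (hx : x ≠ 0) : Lop f t x = t * pdt f t x + ‖x‖ * pdr f t x := by
  simp only [Lop, pdr, mul_sum]
  congr 1
  exact sum_congr rfl fun i _ => by field_simp

lemma aGam_eq : aGam f t x =
    |Lop f t x| + |rot 0 1 f t x| + |rot 0 2 f t x| + |rot 1 2 f t x| + aGrad f t x := by
  simp only [aGam, gam, Fin.isValue, Fin.sum_univ_eight, ↓reduceIte, one_ne_zero, Fin.reduceEq,
    aGrad, Fin.sum_univ_four]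
  ring

lemma aGrad_le_aGam : aGrad f t x ≤ aGam f t x := by
  rw [aGam_eq]
  linarith [abs_nonneg (Lop f t x), abs_nonneg (rot 0 1 f t x), abs_nonneg (rot 0 2 f t x),
    abs_nonneg (rot 1 2 f t x)]

lemma abs_Lop_le_aGam : |Lop f t x| ≤ aGam f t x := by
  rw [aGam_eq]
  linarith [aGrad_nonneg f t x, abs_nonneg (rot 0 1 f t x), abs_nonneg (rot 0 2 f t x),
    abs_nonneg (rot 1 2 f t x)]

lemma rot_self (i : Fin 3) : rot i i f t x = 0 := sub_self _

lemma abs_rot_comm (i j : Fin 3) : |rot j i f t x| = |rot i j f t x| := abs_sub_comm _ _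

lemma sum_abs_rot_le_aGam (i : Fin 3) : ∑ j, |rot i j f t x| ≤ aGam f t x := by
  have := aGrad_nonneg f t x
  have := abs_nonneg (Lop f t x)
  have := abs_nonneg (rot 0 1 f t x)
  have := abs_nonneg (rot 0 2 f t x)
  have := abs_nonneg (rot 1 2 f t x)
  rw [aGam_eq, Fin.sum_univ_three]
  obtain rfl | rfl | rfl : i = 0 ∨ i = 1 ∨ i = 2 := by fin_cases i <;> simp
  · rw [rot_self, abs_zero]; linarith
  · rw [rot_self, abs_zero, abs_rot_comm]; linarith
  · rw [rot_self, abs_zero, abs_rot_comm, abs_rot_comm f t x 1 2]; linarith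

end Pointwise

def IsNullCovector (c : ℝ) (ξ : Fin 4 → ℝ) : Prop :=
  ξ 0 ^ 2 / c ^ 2 - ξ 1 ^ 2 - ξ 2 ^ 2 - ξ 3 ^ 2 = 0

def nullDir (c : ℝ) (x : E3) : Fin 4 → ℝ := Fin.cons (-c) fun i => x i / ‖x‖

def nullFormConst (c c₀ : ℝ) : ℝ := 2 + 2 / c₀ + 4 * (1 + c) / c

lemma isNullCovector_nullDir {c : ℝ} {x : E3} (hc : c ≠ 0) (hx : x ≠ 0) :
    IsNullCovector c (nullDir c x) := by
  have hr : ‖x‖ ≠ 0 := norm_ne_zero_iff.mpr hx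
  have hr2 : ‖x‖ ^ 2 = x 0 ^ 2 + x 1 ^ 2 + x 2 ^ 2 := by
    simp [EuclideanSpace.norm_sq_eq, Fin.sum_univ_three]
  change (-c) ^ 2 / c ^ 2 - (x 0 / ‖x‖) ^ 2 - (x 1 / ‖x‖) ^ 2 - (x 2 / ‖x‖) ^ 2 = 0
  field_simp
  linear_combination hr2

section NullDecomposition

variable (f : ℝ → E3 → ℝ) {t : ℝ} {x : E3} {c c₀ : ℝ}

lemma abs_mul_nullDir_le (hc : 0 < c) (α : Fin 4) :
    |-pdt f t x / c * nullDir c x α| ≤ (1 + c⁻¹) * aGrad f t x := by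
  have ha₀ : |pdt f t x| ≤ aGrad f t x := abs_pd_le_aGrad f t x 0
  have hP := aGrad_nonneg f t x
  refine Fin.cases ?_ (fun i => ?_) α
  · have : -pdt f t x / c * nullDir c x 0 = pdt f t x := by
      simp only [nullDir, Fin.cons_zero, mul_neg]; field_simp
    rw [this]
    nlinarith [inv_pos.mpr hc]
  · rw [nullDir, Fin.cons_succ, abs_mul, abs_div, abs_neg, abs_of_pos hc]
    calc |pdt f t x| / c * |x i / ‖x‖| ≤ aGrad f t x / c * 1 := by
          gcongr; exact abs_coord_div_norm_le_one x i
      _ ≤ (1 + c⁻¹) * aGrad f t x := by rw [div_eq_inv_mul]; nlinarith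

lemma abs_pdt_add_mul_pdr_le (hc : 0 < c) (ht : 0 ≤ t) (hr : 1 ≤ ‖x‖) :
    |pdt f t x + c * pdr f t x| ≤
      4 * (1 + c) / jb (t + ‖x‖) * (aGam f t x + jb (c * t - ‖x‖) * aGrad f t x) := by
  have hrad := abs_add_mul_le_of_scaling hc ht hr (abs_pd_le_aGrad f t x 0) (abs_pdr_le_aGrad f t x)
  rw [pd_zero, ← Lop_eq f t x (norm_pos_iff.mp (one_pos.trans_le hr))] at hrad
  calc |pdt f t x + c * pdr f t x|
      ≤ 4 * (1 + c) * (|Lop f t x| + jb (c * t - ‖x‖) * aGrad f t x) / jb (t + ‖x‖) := hrad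
    _ ≤ 4 * (1 + c) * (aGam f t x + jb (c * t - ‖x‖) * aGrad f t x) / jb (t + ‖x‖) := by
        have := jb_nonneg (t + ‖x‖)
        gcongr; exact abs_Lop_le_aGam f t x
    _ = _ := by ring

lemma abs_pdx_sub_pdr_le (hc₀ : 0 < c₀) (ht : 0 ≤ t) (htx : c₀ * t / 2 ≤ ‖x‖) (hr : 1 ≤ ‖x‖)
    (i : Fin 3) :
    |pdx i f t x - x i / ‖x‖ * pdr f t x| ≤
      (2 + 2 / c₀) / jb (t + ‖x‖) * (aGam f t x + jb (c * t - ‖x‖) * aGrad f t x) := by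
  have hr₀ : 0 < ‖x‖ := one_pos.trans_le hr
  have hjT_le : jb (t + ‖x‖) ≤ (2 + 2 / c₀) * ‖x‖ := by
    simpa [max_eq_right hr] using jb_add_le_mul_max hc₀ ht htx
  have hΓQ : aGam f t x ≤ aGam f t x + jb (c * t - ‖x‖) * aGrad f t x :=
    le_add_of_nonneg_right (mul_nonneg (jb_nonneg _) (aGrad_nonneg ..))
  have hQ := (aGam_nonneg f t x).trans hΓQ
  rw [pdr_eq]
  calc _ ≤ (∑ j, |rot i j f t x|) / ‖x‖ :=
        abs_sub_radial_le x (norm_pos_iff.mp hr₀) (fun j => pdx j f t x) i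
    _ ≤ (aGam f t x + jb (c * t - ‖x‖) * aGrad f t x) / ‖x‖ := by
        gcongr; exact (sum_abs_rot_le_aGam f t x i).trans hΓQ
    _ ≤ _ := by
        rw [div_mul_eq_mul_div, div_le_div_iff₀ hr₀ (jb_pos _)]
        nlinarith [mul_le_mul_of_nonneg_left hjT_le hQ]

lemma abs_pd_sub_nullDir_le (hc : 0 < c) (hc₀ : 0 < c₀) (ht : 0 ≤ t)
    (htx : c₀ * t / 2 ≤ ‖x‖) (hr : 1 ≤ ‖x‖) (α : Fin 4) :
    |pd α f t x - -pdt f t x / c * nullDir c x α| ≤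
      nullFormConst c c₀ / jb (t + ‖x‖) * (aGam f t x + jb (c * t - ‖x‖) * aGrad f t x) := by
  set Q := aGam f t x + jb (c * t - ‖x‖) * aGrad f t x
  have hQ : 0 ≤ Q := add_nonneg (aGam_nonneg ..) (mul_nonneg (jb_nonneg _) (aGrad_nonneg ..))
  refine Fin.cases ?_ (fun i => ?_) α
  · have : pd 0 f t x - -pdt f t x / c * nullDir c x 0 = 0 := by
      simp only [nullDir, pd_zero, Fin.cons_zero]; field_simp; ring
    rw [this, abs_zero]
    exact mul_nonneg (div_nonneg (by unfold nullFormConst; positivity) (jb_nonneg _)) hQ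
  have hradial : |x i / ‖x‖ * ((pdt f t x + c * pdr f t x) / c)| ≤
      4 * (1 + c) / c / jb (t + ‖x‖) * Q :=
    calc |x i / ‖x‖ * ((pdt f t x + c * pdr f t x) / c)|
        = |x i / ‖x‖| * (|pdt f t x + c * pdr f t x| / c) := by
          rw [abs_mul, abs_div (pdt f t x + c * pdr f t x), abs_of_pos hc]
      _ ≤ 1 * (4 * (1 + c) / jb (t + ‖x‖) * Q / c) := by
          gcongr
          · exact abs_coord_div_norm_le_one x i
          · exact abs_pdt_add_mul_pdr_le f hc ht hr
      _ = 4 * (1 + c) / c / jb (t + ‖x‖) * Q := by ring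
  rw [pd_succ, nullDir, Fin.cons_succ]
  calc |pdx i f t x - -pdt f t x / c * (x i / ‖x‖)|
      = |(pdx i f t x - x i / ‖x‖ * pdr f t x)
          + x i / ‖x‖ * ((pdt f t x + c * pdr f t x) / c)| := by
        congr 1; field_simp; ring
    _ ≤ (2 + 2 / c₀) / jb (t + ‖x‖) * Q + 4 * (1 + c) / c / jb (t + ‖x‖) * Q :=
        (abs_add_le _ _).trans (add_le_add (abs_pdx_sub_pdr_le f hc₀ ht htx hr i) hradial)
    _ = nullFormConst c c₀ / jb (t + ‖x‖) * Q := by unfold nullFormConst; ring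

end NullDecomposition

lemma abs_pd_le_of_norm_le_one (f : ℝ → E3 → ℝ) {t : ℝ} {x : E3} {c c₀ : ℝ} (hc : 0 < c)
    (hc₀ : 0 < c₀) (ht : 0 ≤ t) (htx : c₀ * t / 2 ≤ ‖x‖) (hr : ‖x‖ ≤ 1) (α : Fin 4) :
    |pd α f t x| ≤
      nullFormConst c c₀ / jb (t + ‖x‖) * (aGam f t x + jb (c * t - ‖x‖) * aGrad f t x) := by
  have hjT := jb_pos (t + ‖x‖)
  have hjT_le : jb (t + ‖x‖) ≤ nullFormConst c c₀ := by
    have := jb_add_le_mul_max hc₀ ht htx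
    rw [max_eq_left hr, mul_one] at this
    unfold nullFormConst
    linarith [show 0 ≤ 4 * (1 + c) / c by positivity]
  have hQ : aGam f t x ≤ aGam f t x + jb (c * t - ‖x‖) * aGrad f t x :=
    le_add_of_nonneg_right (mul_nonneg (jb_nonneg _) (aGrad_nonneg ..))
  calc |pd α f t x| ≤ aGam f t x := (abs_pd_le_aGrad f t x α).trans (aGrad_le_aGam f t x)
    _ ≤ 1 * (aGam f t x + jb (c * t - ‖x‖) * aGrad f t x) := by rwa [one_mul]
    _ ≤ _ := by
        gcongr
        · exact hQ.trans' (aGam_nonneg ..)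
        · rwa [le_div_iff₀ hjT, one_mul]

lemma exists_null_decomposition {t : ℝ} {x : E3} {c c₀ : ℝ} (hc : 0 < c) (hc₀ : 0 < c₀)
    (ht : 0 ≤ t) (htx : c₀ * t / 2 ≤ ‖x‖) :
    ∃ ν : Fin 4 → ℝ, IsNullCovector c ν ∧ ∀ f : ℝ → E3 → ℝ, ∃ s : ℝ,
      (∀ α, |pd α f t x - s * ν α| ≤
        nullFormConst c c₀ / jb (t + ‖x‖) * (aGam f t x + jb (c * t - ‖x‖) * aGrad f t x)) ∧
      ∀ α, |s * ν α| ≤ (1 + c⁻¹) * aGrad f t x := by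
  rcases le_or_gt 1 ‖x‖ with hr | hr
  · refine ⟨nullDir c x, isNullCovector_nullDir hc.ne' (norm_pos_iff.mp (one_pos.trans_le hr)),
      fun f => ⟨_, abs_pd_sub_nullDir_le f hc hc₀ ht htx hr, abs_mul_nullDir_le f hc⟩⟩
  · refine ⟨0, by simp [IsNullCovector], fun f => ⟨0, fun α => ?_, fun α => ?_⟩⟩
    · simpa using abs_pd_le_of_norm_le_one f hc hc₀ ht htx hr.le α
    · simpa using mul_nonneg (by positivity : (0 : ℝ) ≤ 1 + c⁻¹) (aGrad_nonneg f t x)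

section Trilinear

variable {ι : Type*} [Fintype ι] (B : ι → ι → ι → ℝ)

def trilinForm (a b d : ι → ℝ) : ℝ := ∑ α, ∑ β, ∑ γ, B α β γ * a α * b β * d γ

lemma trilinForm_mul (p q s : ℝ) (a b d : ι → ℝ) :
    trilinForm B (fun α => p * a α) (fun β => q * b β) (fun γ => s * d γ) =
      p * q * s * trilinForm B a b d := by
  simp only [trilinForm, mul_sum]
  exact sum_congr rfl fun _ _ => sum_congr rfl fun _ _ => sum_congr rfl fun _ _ => by ring

lemma trilinForm_eq_add (a b d a' b' d' : ι → ℝ) :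
    trilinForm B a b d = trilinForm B (a - a') b d + trilinForm B a' (b - b') d
      + trilinForm B a' b' (d - d') + trilinForm B a' b' d' := by
  simp only [trilinForm, ← sum_add_distrib, Pi.sub_apply]
  exact sum_congr rfl fun _ _ => sum_congr rfl fun _ _ => sum_congr rfl fun _ _ => by ring

lemma abs_trilinForm_le {a b d : ι → ℝ} {p q s : ℝ} (ha : ∀ α, |a α| ≤ p) (hb : ∀ β, |b β| ≤ q)
    (hd : ∀ γ, |d γ| ≤ s) :
    |trilinForm B a b d| ≤ (∑ α, ∑ β, ∑ γ, |B α β γ|) * (p * q * s) := by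
  simp only [trilinForm, sum_mul]
  refine (abs_sum_le_sum_abs _ _).trans (sum_le_sum fun α _ => ?_)
  refine (abs_sum_le_sum_abs _ _).trans (sum_le_sum fun β _ => ?_)
  refine (abs_sum_le_sum_abs _ _).trans (sum_le_sum fun γ _ => ?_)
  rw [abs_mul, abs_mul, abs_mul, mul_assoc, mul_assoc, ← mul_assoc |a α|]
  have hp : 0 ≤ p := (abs_nonneg _).trans (ha α)
  have hq : 0 ≤ q := (abs_nonneg _).trans (hb β)
  gcongr
  exacts [ha α, hb β, hd γ]

lemma abs_trilinForm_le_of_null {a b d a' b' d' : ι → ℝ} {q s p' q' g₁ g₂ g₃ : ℝ}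
    (h₀ : trilinForm B a' b' d' = 0) (hb : ∀ β, |b β| ≤ q) (hd : ∀ γ, |d γ| ≤ s)
    (ha' : ∀ α, |a' α| ≤ p') (hb' : ∀ β, |b' β| ≤ q')
    (hga : ∀ α, |a α - a' α| ≤ g₁) (hgb : ∀ β, |b β - b' β| ≤ g₂)
    (hgd : ∀ γ, |d γ - d' γ| ≤ g₃) :
    |trilinForm B a b d| ≤
      (∑ α, ∑ β, ∑ γ, |B α β γ|) * (g₁ * q * s + p' * g₂ * s + p' * q' * g₃) := by
  rw [trilinForm_eq_add B a b d a' b' d', h₀, add_zero, mul_add, mul_add]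
  exact (abs_add_three _ _ _).trans (add_le_add_three (abs_trilinForm_le B hga hb hd)
    (abs_trilinForm_le B ha' hgb hd) (abs_trilinForm_le B ha' hb' hgd))

end Trilinear

lemma null_form_bracket_le {M ε k j Γu Γv Γw Pu Pv Pw : ℝ} (hM : 0 ≤ M) (hε : 0 ≤ ε)
    (hk : 1 ≤ k) (hj : 0 ≤ j) (hΓu : 0 ≤ Γu) (hΓv : 0 ≤ Γv) (hΓw : 0 ≤ Γw) (hPu : 0 ≤ Pu)
    (hPv : 0 ≤ Pv) (hPw : 0 ≤ Pw) :
    M * (ε * (Γu + j * Pu) * Pv * Pw + k * Pu * (ε * (Γv + j * Pv)) * Pw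
        + k * Pu * (k * Pv) * (ε * (Γw + j * Pw))) ≤
      3 * (M + 1) * k ^ 2 * ε *
        (Γu * Pv * Pw + Pu * Γv * Pw + Pu * Pv * Γw + j * Pu * Pv * Pw) := by
  have hX₁ : 0 ≤ Γu * Pv * Pw := by positivity
  have hX₂ : 0 ≤ Pu * Γv * Pw := by positivity
  have hX₃ : 0 ≤ Pu * Pv * Γw := by positivity
  have hP : 0 ≤ j * Pu * Pv * Pw := by positivity
  have hk₂ : k ≤ k ^ 2 := by nlinarith
  have hinner : ε * (Γu + j * Pu) * Pv * Pw + k * Pu * (ε * (Γv + j * Pv)) * Pw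
      + k * Pu * (k * Pv) * (ε * (Γw + j * Pw)) ≤
        3 * k ^ 2 * ε * (Γu * Pv * Pw + Pu * Γv * Pw + Pu * Pv * Γw + j * Pu * Pv * Pw) := by
    have : (Γu * Pv * Pw + j * Pu * Pv * Pw) + k * (Pu * Γv * Pw + j * Pu * Pv * Pw)
        + k ^ 2 * (Pu * Pv * Γw + j * Pu * Pv * Pw) ≤
          3 * k ^ 2 * (Γu * Pv * Pw + Pu * Γv * Pw + Pu * Pv * Γw + j * Pu * Pv * Pw) := by
      nlinarith
    calc _ = ε * ((Γu * Pv * Pw + j * Pu * Pv * Pw) + k * (Pu * Γv * Pw + j * Pu * Pv * Pw)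
        + k ^ 2 * (Pu * Pv * Γw + j * Pu * Pv * Pw)) := by ring
      _ ≤ _ := by rw [mul_comm (3 * k ^ 2) ε, mul_assoc ε]; gcongr
  calc _ ≤ (M + 1) * (3 * k ^ 2 * ε *
        (Γu * Pv * Pw + Pu * Γv * Pw + Pu * Pv * Γw + j * Pu * Pv * Pw)) := by
        gcongr
        linarith
    _ = _ := by ring

/-- null form estimate for `B^{αβ}_γ ∂_α u ∂_β v ∂_γ w`. -/
theorem stmt_7 :
    ∀ (D : ℕ) (c : Fin D → ℝ),
      (∀ i j : Fin D, i < j → c j < c i) → (∀ i, 0 < c i) →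
    ∀ (B : Fin 4 → Fin 4 → Fin 4 → ℝ) (K : Fin D),
      (∀ ξ : Fin 4 → ℝ,
        (ξ 0) ^ 2 / (c K) ^ 2 - (ξ 1) ^ 2 - (ξ 2) ^ 2 - (ξ 3) ^ 2 = 0 →
        (∑ α : Fin 4, ∑ β : Fin 4, ∑ γ : Fin 4, B α β γ * ξ α * ξ β * ξ γ) = 0) →
    ∀ c0 : ℝ, ((∀ I : Fin D, c0 ≤ c I / 2) ∧ ∃ I : Fin D, c0 = c I / 2) →
    ∃ C : ℝ, 0 < C ∧
      ∀ (u v w : ℝ → E3 → ℝ) (U : Set (ℝ × E3)), IsOpen U →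
        {p : ℝ × E3 | 0 ≤ p.1 ∧ c0 * p.1 / 2 ≤ ‖p.2‖} ⊆ U →
        ContDiffOn ℝ (⊤ : ℕ∞) (fun p : ℝ × E3 => u p.1 p.2) U →
        ContDiffOn ℝ (⊤ : ℕ∞) (fun p : ℝ × E3 => v p.1 p.2) U →
        ContDiffOn ℝ (⊤ : ℕ∞) (fun p : ℝ × E3 => w p.1 p.2) U →
        ∀ (t : ℝ) (x : E3), 0 ≤ t → c0 * t / 2 ≤ ‖x‖ →
          |∑ α : Fin 4, ∑ β : Fin 4, ∑ γ : Fin 4,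
              B α β γ * pd α u t x * pd β v t x * pd γ w t x| ≤
            C * (jb (t + ‖x‖))⁻¹ *
              (aGam u t x * aGrad v t x * aGrad w t x
                + aGrad u t x * aGam v t x * aGrad w t x
                + aGrad u t x * aGrad v t x * aGam w t x
                + jb (c K * t - ‖x‖) * aGrad u t x * aGrad v t x * aGrad w t x) := by
  intro D c _ hpos B K hnull c0 ⟨_, J, hc0J⟩
  have hc := hpos K
  have hc0 : 0 < c0 := hc0J ▸ half_pos (hpos J)
  have hM : 0 ≤ ∑ α, ∑ β, ∑ γ, |B α β γ| := by positivity
  have hC₁ : 0 < nullFormConst (c K) c0 := by unfold nullFormConst; positivity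
  refine ⟨3 * ((∑ α, ∑ β, ∑ γ, |B α β γ|) + 1) * (1 + (c K)⁻¹) ^ 2 * nullFormConst (c K) c0,
    by positivity, ?_⟩
  intro u v w _ _ _ _ _ _ t x ht htx
  obtain ⟨ν, hν, hdec⟩ := exists_null_decomposition hc hc0 ht htx
  obtain ⟨su, hgu, hnu⟩ := hdec u
  obtain ⟨sv, hgv, hnv⟩ := hdec v
  obtain ⟨sw, hgw, -⟩ := hdec w
  have h₀ : trilinForm B (fun α => su * ν α) (fun β => sv * ν β) (fun γ => sw * ν γ) = 0 := by
    rw [trilinForm_mul, show trilinForm B ν ν ν = 0 from hnull ν hν, mul_zero]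
  refine (abs_trilinForm_le_of_null B h₀ (abs_pd_le_aGrad v t x) (abs_pd_le_aGrad w t x)
    hnu hnv hgu hgv hgw).trans ?_
  refine (null_form_bracket_le hM (div_nonneg hC₁.le (jb_nonneg _))
    (le_add_of_nonneg_right (inv_nonneg.mpr hc.le)) (jb_nonneg _) (aGam_nonneg u t x)
    (aGam_nonneg v t x) (aGam_nonneg w t x) (aGrad_nonneg u t x) (aGrad_nonneg v t x)
    (aGrad_nonneg w t x)).trans_eq ?_
  ring
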